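/- arXiv:2405.15009 — 6 statements merged into one kernel-verified Lean document; each statement's English description precedes it below -/
import Mathlib

section
/- Let φ be a positive linear map on a unital C*-algebra A and let s > 0. If the spectral radius of φ satisfies r(φ) < s, then there exists a positive element w ∈ A such that φ(w) = s(w - 1). -/
/-!
Put `ψ = s⁻¹ • φ`, so that `r(ψ) = r(φ) / s < 1`. By Gelfand's formula `‖ψⁿ‖ ≤ tⁿ` eventually
for some `t < 1`, so the Neumann series `∑ ψⁿ` converges in the Banach algebra of operators and
`w = ∑ ψⁿ(1)` satisfies `w - ψ(w) = 1`, i.e. `φ(w) = s(w - 1)`. Each `ψⁿ(1)` is positive, hence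
so is `w`.
-/

open Filter
open scoped ComplexOrder

namespace spectrum

theorem spectralRadius_smul {𝕜 A : Type*} [NormedField 𝕜] [Ring A] [Algebra 𝕜 A] (k : 𝕜) (a : A) :
    spectralRadius 𝕜 (k • a) = ‖k‖₊ * spectralRadius 𝕜 a := by
  obtain rfl | hk := eq_or_ne k 0
  · simp
  have hσ : spectrum 𝕜 (k • a) = (k • ·) '' spectrum 𝕜 a := by
    rw [Set.image_smul]
    exact unit_smul_eq_smul a (Units.mk0 k hk)
  simp only [spectralRadius, hσ, iSup_image, smul_eq_mul, nnnorm_mul, ENNReal.coe_mul,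
    ENNReal.mul_iSup]

theorem summable_pow_of_spectralRadius_lt_one {A : Type*} [NormedRing A] [NormedAlgebra ℂ A]
    [CompleteSpace A] {a : A} (h : spectralRadius ℂ a < 1) : Summable (a ^ ·) := by
  obtain ⟨t, hat, ht1⟩ := ENNReal.lt_iff_exists_nnreal_btwn.mp h
  have hpow : ∀ᶠ n : ℕ in atTop, ‖a ^ n‖₊ ≤ t ^ n := by
    filter_upwards [(pow_nnnorm_pow_one_div_tendsto_nhds_spectralRadius a).eventually_lt_const hat,
      eventually_ne_atTop 0] with n hn hn0
    rw [one_div, ENNReal.rpow_inv_lt_iff (by positivity), ENNReal.rpow_natCast] at hn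
    exact_mod_cast hn.le
  refine .of_norm_bounded_eventually_nat
    (summable_geometric_of_lt_one t.coe_nonneg (mod_cast ht1)) ?_
  filter_upwards [hpow] with n hn
  exact_mod_cast hn

end spectrum

namespace ContinuousLinearMap

variable {𝕜 E : Type*} [NontriviallyNormedField 𝕜] [NormedAddCommGroup E] [NormedSpace 𝕜 E]

theorem pow_apply_nonneg [Preorder E] {ψ : E →L[𝕜] E} (hψ : ∀ x, 0 ≤ x → 0 ≤ ψ x) {x : E}
    (hx : 0 ≤ x) (n : ℕ) : 0 ≤ (ψ ^ n) x := by
  induction n with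
  | zero => exact hx
  | succ n ih => rw [pow_succ', mul_apply_eq_comp]; exact hψ _ ih

theorem tsum_pow_apply_nonneg [PartialOrder E] [IsOrderedAddMonoid E] [OrderClosedTopology E]
    {ψ : E →L[𝕜] E} (hψ : ∀ x, 0 ≤ x → 0 ≤ ψ x) (hsum : Summable (ψ ^ ·)) {x : E}
    (hx : 0 ≤ x) : 0 ≤ (∑' n, ψ ^ n) x := by
  rw [← apply_apply (𝕜 := 𝕜), (apply 𝕜 E x).map_tsum hsum]
  exact tsum_nonneg fun n => pow_apply_nonneg hψ hx n

theorem apply_tsum_pow_apply {ψ : E →L[𝕜] E} (hsum : Summable (ψ ^ ·)) (x : E) :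
    ψ ((∑' n, ψ ^ n) x) = (∑' n, ψ ^ n) x - x := by
  have := congr($(hsum.one_sub_mul_tsum_pow) x)
  rw [mul_apply_eq_comp, sub_apply, one_apply_eq_self, one_apply_eq_self] at this
  exact eq_sub_of_add_eq (sub_eq_iff_eq_add'.mp this).symm

end ContinuousLinearMap

/-- If `φ` is a positive linear map on a unital C*-algebra `A` and `s > 0` satisfies
`r(φ) < s`, then there exists a positive `w ∈ A` with `φ(w) = s(w - 1)`. -/
theorem stmt0 {A : Type*} [CStarAlgebra A] [PartialOrder A] [StarOrderedRing A]
    (φ : A →L[ℂ] A) (hφ : ∀ a : A, 0 ≤ a → 0 ≤ φ a)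
    (s : ℝ) (hs : 0 < s)
    (hr : spectralRadius ℂ φ < ENNReal.ofReal s) :
    ∃ w : A, 0 ≤ w ∧ φ w = (s : ℂ) • (w - 1) := by
  set ψ := (s : ℂ)⁻¹ • φ
  have hψ : ∀ a : A, 0 ≤ a → 0 ≤ ψ a := fun a ha => smul_nonneg (by positivity) (hφ a ha)
  have hψr : spectralRadius ℂ ψ < 1 :=
    calc spectralRadius ℂ ψ = ‖(s : ℂ)⁻¹‖₊ * spectralRadius ℂ φ := spectrum.spectralRadius_smul _ _
      _ < ‖(s : ℂ)⁻¹‖₊ * ENNReal.ofReal s := by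
        gcongr
        · simpa using hs.ne'
        · simp
      _ = 1 := by
        rw [← ENNReal.ofReal_coe_nnreal, ← ENNReal.ofReal_mul (by positivity), coe_nnnorm,
          norm_inv, Complex.norm_of_nonneg hs.le, inv_mul_cancel₀ hs.ne', ENNReal.ofReal_one]
  have hsum := spectrum.summable_pow_of_spectralRadius_lt_one hψr
  have hφψ : φ = (s : ℂ) • ψ := by
    rw [smul_smul, mul_inv_cancel₀ (by exact_mod_cast hs.ne'), one_smul]
  refine ⟨(∑' n, ψ ^ n) 1, ψ.tsum_pow_apply_nonneg hψ hsum zero_le_one, ?_⟩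
  rw [hφψ, smul_apply, ψ.apply_tsum_pow_apply hsum]
end

section
/- Let φ be a positive linear map on a unital C*-algebra A. Then r(φ) = inf { r(w⁻¹ φ(w)) : w ∈ A strictly positive }, where r on the right denotes the spectral radius in A. -/
/-!
For strictly positive `w`, the element `w⁻¹ φ(w)` has the same spectral radius as the positive
element `c = w^{-1/2} φ(w) w^{-1/2}`, namely `‖c‖`, and conjugating `c ≤ ‖c‖` by `w^{1/2}` gives
`φ(w) ≤ ‖c‖ w`. Iterating, `φⁿ(w) ≤ ‖c‖ⁿ w`; since `w` is comparable with `1` and a positive map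
attains its norm at `1` up to a factor `4`, this gives `‖φⁿ‖ ≤ C ‖c‖ⁿ` and hence `r(φ) ≤ ‖c‖`.

Conversely, for `t > r(φ)` the Neumann series `w = ∑ t⁻ⁿ φⁿ(1)` converges to a positive element
with `φ(w) = t (w - 1)`, so `w ≥ 1` is invertible and `w⁻¹ φ(w) = t (1 - w⁻¹)` with
`0 ≤ 1 - w⁻¹ ≤ 1`, whose spectral radius is at most `t`.
-/

open scoped NNReal ENNReal
open CFC

section SpectralRadius

variable {𝕜 B : Type*} [NormedField 𝕜] [NormedRing B] [NormedAlgebra 𝕜 B]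

lemma spectralRadius_mul_comm_le (a b : B) :
    spectralRadius 𝕜 (a * b) ≤ spectralRadius 𝕜 (b * a) := by
  refine iSup₂_le fun k hk => ?_
  rcases eq_or_ne k 0 with rfl | hk0
  · simp
  · have hk' : k ∈ spectrum 𝕜 (b * a) \ {0} := spectrum.nonzero_mul_comm (𝕜 := 𝕜) a b ▸ ⟨hk, hk0⟩
    exact le_iSup₂ (f := fun k (_ : k ∈ spectrum 𝕜 (b * a)) => (‖k‖₊ : ℝ≥0∞)) k hk'.1

lemma spectralRadius_mul_comm (a b : B) :
    spectralRadius 𝕜 (a * b) = spectralRadius 𝕜 (b * a) :=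
  (spectralRadius_mul_comm_le a b).antisymm (spectralRadius_mul_comm_le b a)

lemma spectralRadius_le_of_nnnorm_pow_le [CompleteSpace B] (a : B) {C t : ℝ≥0}
    (h : ∀ n, ‖a ^ n‖₊ ≤ C * t ^ n) : spectralRadius 𝕜 a ≤ t := by
  refine ENNReal.le_of_forall_lt_one_mul_le fun ε hε => ?_
  rcases eq_or_ne ε 0 with rfl | hε0
  · simp
  rw [mul_comm, ← ENNReal.le_div_iff_mul_le (.inl hε0) (.inl (hε.trans ENNReal.one_lt_top).ne),
    ENNReal.div_eq_inv_mul]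
  obtain ⟨N, hN⟩ := (ENNReal.eventually_pow_one_div_le (ENNReal.coe_ne_top (r := C * ‖(1 : B)‖₊))
    (ENNReal.one_lt_inv.2 hε)).exists_forall_of_atTop
  have hN1 : (0 : ℝ) < 1 / (N + 1 : ℕ) := by positivity
  calc spectralRadius 𝕜 a
      ≤ ((‖a ^ (N + 1)‖₊ * ‖(1 : B)‖₊ : ℝ≥0) : ℝ≥0∞) ^ (1 / (N + 1 : ℕ) : ℝ) := by
        rw [ENNReal.coe_mul, ENNReal.mul_rpow_of_nonneg _ _ hN1.le]
        exact_mod_cast spectrum.spectralRadius_le_pow_nnnorm_pow_one_div 𝕜 a N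
    _ ≤ ((C * ‖(1 : B)‖₊ * t ^ (N + 1) : ℝ≥0) : ℝ≥0∞) ^ (1 / (N + 1 : ℕ) : ℝ) := by
        gcongr ?_ ^ _
        refine ENNReal.coe_le_coe.2 ?_
        calc ‖a ^ (N + 1)‖₊ * ‖(1 : B)‖₊ ≤ C * t ^ (N + 1) * ‖(1 : B)‖₊ := by gcongr; exact h _
          _ = C * ‖(1 : B)‖₊ * t ^ (N + 1) := by ring
    _ = ((C * ‖(1 : B)‖₊ : ℝ≥0) : ℝ≥0∞) ^ (1 / (N + 1 : ℕ) : ℝ) * t := by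
        rw [ENNReal.coe_mul _ (t ^ _), ENNReal.mul_rpow_of_nonneg _ _ hN1.le, ENNReal.coe_pow,
          ← ENNReal.rpow_natCast, ← ENNReal.rpow_mul, mul_one_div_cancel (by positivity),
          ENNReal.rpow_one]
    _ ≤ ε⁻¹ * t := by gcongr; exact hN _ N.le_succ

end SpectralRadius

lemma hasSum_pow_smul_pow_inverse_one_sub_smul {B : Type*} [NormedRing B] [NormedAlgebra ℂ B]
    [CompleteSpace B] (a : B) {z : ℂ} (hz : (‖z‖₊ : ℝ≥0∞) < (spectralRadius ℂ a)⁻¹) :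
    HasSum (fun n => z ^ n • a ^ n) (Ring.inverse (1 - z • a)) := by
  obtain ⟨r, hzr, hr⟩ := ENNReal.lt_iff_exists_nnreal_btwn.1 hz
  have hr0 : 0 < r := ENNReal.coe_pos.1 (bot_le.trans_lt hzr)
  have H := (spectrum.hasFPowerSeriesOnBall_inverse_one_sub_smul ℂ a).exchange_radius
    ((spectrum.differentiableOn_inverse_one_sub_smul hr).hasFPowerSeriesOnBall hr0)
  simpa using H.hasSum (y := z) (by simpa [← coe_nnnorm] using hzr)

lemma ContinuousLinearMap.pow_apply_nonneg_s3 {𝕜 M : Type*} [Semiring 𝕜] [TopologicalSpace M]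
    [AddCommMonoid M] [PartialOrder M] [Module 𝕜 M] {ψ : M →L[𝕜] M}
    (hψ : ∀ a, 0 ≤ a → 0 ≤ ψ a) (n : ℕ) {a : M} (ha : 0 ≤ a) : 0 ≤ (ψ ^ n) a := by
  induction n generalizing a with
  | zero => simpa using ha
  | succ n ih => simpa [pow_succ] using ih (hψ a ha)

section CStarAlgebra

variable {A : Type*} [CStarAlgebra A] [PartialOrder A] [StarOrderedRing A]

lemma ContinuousLinearMap.opNorm_le_of_map_nonneg {B : Type*} [CStarAlgebra B] [PartialOrder B]
    [StarOrderedRing B] (ψ : A →L[ℂ] B) (hψ : ∀ a, 0 ≤ a → 0 ≤ ψ a) : ‖ψ‖ ≤ 4 * ‖ψ 1‖ := by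
  refine ψ.opNorm_le_bound (by positivity) fun a => ?_
  obtain ⟨x, hx0, hxa, ha⟩ := CStarAlgebra.exists_sum_four_nonneg a
  calc ‖ψ a‖ ≤ ∑ i : Fin 4, ‖ψ (x i)‖ := by
        simpa [ha, map_sum, norm_smul] using
          norm_sum_le Finset.univ fun i : Fin 4 => Complex.I ^ (i : ℕ) • ψ (x i)
    _ ≤ ∑ _i : Fin 4, ‖ψ 1‖ * ‖a‖ := by
        refine Finset.sum_le_sum fun i _ => ?_
        calc ‖ψ (x i)‖ ≤ ‖ψ 1‖ * ‖x i‖ :=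
              PositiveLinearMap.norm_apply_le_of_nonneg (.mk₀ ψ.toLinearMap hψ) _ (hx0 i)
          _ ≤ ‖ψ 1‖ * ‖a‖ := by gcongr; exact hxa i
    _ = 4 * ‖ψ 1‖ * ‖a‖ := by simp [mul_assoc]

lemma ContinuousLinearMap.pow_apply_le_smul {ψ : A →L[ℂ] A} (hψ : ∀ a, 0 ≤ a → 0 ≤ ψ a)
    {w : A} {s : ℝ} (hs : 0 ≤ s) (h : ψ w ≤ s • w) (n : ℕ) : (ψ ^ n) w ≤ s ^ n • w := by
  induction n with
  | zero => simp
  | succ n ih =>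
    calc (ψ ^ (n + 1)) w = ψ ((ψ ^ n) w) := by rw [pow_succ']; rfl
      _ ≤ ψ (s ^ n • w) := (PositiveLinearMap.mk₀ ψ.toLinearMap hψ).monotone' ih
      _ = s ^ n • ψ w := ψ.map_smul_of_tower _ _
      _ ≤ s ^ n • s • w := by gcongr
      _ = s ^ (n + 1) • w := by rw [smul_smul, pow_succ]

lemma IsSelfAdjoint.conjSqrt {b : A} (hb : IsSelfAdjoint b) (c : A) :
    IsSelfAdjoint (conjSqrt c b) := by
  simpa [conjSqrt_apply, (sqrt_nonneg c).isSelfAdjoint.star_eq] using hb.conjugate (sqrt c)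

lemma spectralRadius_mul_eq_conjSqrt {c : A} (hc : 0 ≤ c) (b : A) :
    spectralRadius ℂ (c * b) = spectralRadius ℂ (conjSqrt c b) := by
  calc spectralRadius ℂ (c * b) = spectralRadius ℂ (sqrt c * (sqrt c * b)) := by
        rw [← mul_assoc, sqrt_mul_sqrt_self c hc]
    _ = spectralRadius ℂ (conjSqrt c b) := spectralRadius_mul_comm _ _

lemma le_norm_conjSqrt_inv_smul {w : Aˣ} (hw : 0 ≤ (w : A)) {b : A} (hb : IsSelfAdjoint b) :
    b ≤ ‖conjSqrt (↑w⁻¹ : A) b‖ • (w : A) := by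
  have hw' : IsStrictlyPositive (w : A) := w.isUnit.isStrictlyPositive hw
  calc b = conjSqrt (w : A) (conjSqrt (↑w⁻¹ : A) b) := by
        rw [← Ring.inverse_unit, conjSqrt_conjSqrt_ringInverse _ _ hw']
    _ ≤ conjSqrt (w : A) (‖conjSqrt (↑w⁻¹ : A) b‖ • 1) := by
        gcongr
        simpa [Algebra.algebraMap_eq_smul_one] using (hb.conjSqrt _).le_algebraMap_norm_self
    _ = ‖conjSqrt (↑w⁻¹ : A) b‖ • (w : A) := by rw [map_smul, conjSqrt_one _ hw]

lemma ContinuousLinearMap.spectralRadius_le_of_map_le_smul {ψ : A →L[ℂ] A}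
    (hψ : ∀ a, 0 ≤ a → 0 ≤ ψ a) {w : Aˣ} (hw : 0 ≤ (w : A)) {s : ℝ≥0}
    (h : ψ w ≤ (s : ℝ) • (w : A)) : spectralRadius ℂ ψ ≤ s := by
  have hψn (n : ℕ) : ∀ a, 0 ≤ a → 0 ≤ (ψ ^ n) a := fun _ => ψ.pow_apply_nonneg_s3 hψ n
  have one_le_norm_inv_smul : (1 : A) ≤ ‖(↑w⁻¹ : A)‖ • (w : A) := by
    simpa [conjSqrt_one _ (inv_nonneg_of_nonneg w hw)] using
      le_norm_conjSqrt_inv_smul hw (.one A)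
  have le_norm_smul_one : (w : A) ≤ ‖(w : A)‖ • 1 := by
    simpa [Algebra.algebraMap_eq_smul_one] using hw.isSelfAdjoint.le_algebraMap_norm_self
  have hpow (n : ℕ) : (ψ ^ n) 1 ≤ (‖(↑w⁻¹ : A)‖ * ‖(w : A)‖ * s ^ n) • 1 :=
    calc (ψ ^ n) 1 ≤ (ψ ^ n) (‖(↑w⁻¹ : A)‖ • (w : A)) :=
          (PositiveLinearMap.mk₀ (ψ ^ n).toLinearMap (hψn n)).monotone' one_le_norm_inv_smul
      _ = ‖(↑w⁻¹ : A)‖ • (ψ ^ n) w := (ψ ^ n).map_smul_of_tower _ _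
      _ ≤ ‖(↑w⁻¹ : A)‖ • (s : ℝ) ^ n • (w : A) := by
          gcongr; exact ψ.pow_apply_le_smul hψ s.2 h n
      _ ≤ ‖(↑w⁻¹ : A)‖ • (s : ℝ) ^ n • ‖(w : A)‖ • (1 : A) := by gcongr
      _ = (‖(↑w⁻¹ : A)‖ * ‖(w : A)‖ * s ^ n) • 1 := by simp only [smul_smul]; ring_nf
  refine spectralRadius_le_of_nnnorm_pow_le ψ (C := 4 * ‖(↑w⁻¹ : A)‖₊ * ‖(w : A)‖₊) fun n => ?_
  rw [← NNReal.coe_le_coe]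
  push_cast
  calc ‖ψ ^ n‖ ≤ 4 * ‖(ψ ^ n) 1‖ := (ψ ^ n).opNorm_le_of_map_nonneg (hψn n)
    _ ≤ 4 * (‖(↑w⁻¹ : A)‖ * ‖(w : A)‖ * s ^ n) := by
        gcongr
        rw [CStarAlgebra.norm_le_iff_le_algebraMap _ (by positivity) (hψn n 1 zero_le_one),
          Algebra.algebraMap_eq_smul_one]
        exact hpow n
    _ = 4 * ‖(↑w⁻¹ : A)‖ * ‖(w : A)‖ * s ^ n := by ring

lemma ContinuousLinearMap.spectralRadius_le_spectralRadius_inv_mul_map {ψ : A →L[ℂ] A}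
    (hψ : ∀ a, 0 ≤ a → 0 ≤ ψ a) {w : Aˣ} (hw : 0 ≤ (w : A)) :
    spectralRadius ℂ ψ ≤ spectralRadius ℂ ((↑w⁻¹ : A) * ψ w) := by
  have hc := ((hψ _ hw).isSelfAdjoint.conjSqrt (↑w⁻¹ : A))
  rw [spectralRadius_mul_eq_conjSqrt (inv_nonneg_of_nonneg w hw), hc.spectralRadius_eq_nnnorm]
  exact ψ.spectralRadius_le_of_map_le_smul hψ hw
    (le_norm_conjSqrt_inv_smul hw (hψ _ hw).isSelfAdjoint)

lemma ContinuousLinearMap.exists_one_le_map_eq_smul_sub_one {ψ : A →L[ℂ] A}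
    (hψ : ∀ a, 0 ≤ a → 0 ≤ ψ a) {t : ℝ≥0} (ht : spectralRadius ℂ ψ < t) :
    ∃ w : A, 1 ≤ w ∧ ψ w = (t : ℝ) • (w - 1) := by
  have ht0 : t ≠ 0 := by rintro rfl; simp at ht
  have hz : (‖(((t⁻¹ : ℝ≥0) : ℝ) : ℂ)‖₊ : ℝ≥0∞) < (spectralRadius ℂ ψ)⁻¹ := by
    simpa [ENNReal.coe_inv ht0] using ENNReal.inv_lt_inv.2 ht
  have hR := Ring.mul_inverse_cancel _ (spectrum.isUnit_one_sub_smul_of_lt_inv_radius hz)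
  obtain ⟨w, hw⟩ : ∃ w, Ring.inverse (1 - (((t⁻¹ : ℝ≥0) : ℝ) : ℂ) • ψ) 1 = w := ⟨_, rfl⟩
  have hw1 : ((t⁻¹ : ℝ≥0) : ℝ) • ψ w = w - 1 := by
    have hR1 := congr($hR 1)
    rw [mul_apply_eq_comp, sub_apply, one_apply_eq_self, one_apply_eq_self, smul_apply, hw,
      Complex.coe_smul] at hR1
    rw [← hR1, sub_sub_cancel]
  have hw0 : 0 ≤ w := by
    refine hw ▸ ((hasSum_pow_smul_pow_inverse_one_sub_smul ψ hz).mapL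
      (ContinuousLinearMap.apply ℂ A 1)).nonneg fun n => ?_
    rw [ContinuousLinearMap.apply_apply, smul_apply, ← Complex.ofReal_pow, Complex.coe_smul]
    exact smul_nonneg (pow_nonneg (t⁻¹).2 n) (ψ.pow_apply_nonneg_s3 hψ n zero_le_one)
  refine ⟨w, sub_nonneg.1 (hw1 ▸ smul_nonneg (t⁻¹).2 (hψ w hw0)), ?_⟩
  rw [← hw1, smul_smul]
  simp [ht0]

lemma spectralRadius_inv_mul_le_of_eq_smul_sub_one {w : Aˣ} (hw : 1 ≤ (w : A)) {b : A} {t : ℝ≥0}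
    (hb : b = (t : ℝ) • ((w : A) - 1)) : spectralRadius ℂ ((↑w⁻¹ : A) * b) ≤ t := by
  have hb' : (↑w⁻¹ : A) * b = (t : ℝ) • (1 - (↑w⁻¹ : A)) := by
    rw [hb, mul_smul_comm, mul_sub, w.inv_mul, mul_one]
  have h0 : 0 ≤ 1 - (↑w⁻¹ : A) := sub_nonneg.2 (CStarAlgebra.inv_le_one hw)
  have h1 : ‖1 - (↑w⁻¹ : A)‖₊ ≤ 1 :=
    (CStarAlgebra.nnnorm_le_one_iff_of_nonneg _ h0).2
      (sub_le_self _ (inv_nonneg_of_nonneg w (zero_le_one.trans hw)))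
  rw [hb', (smul_nonneg t.coe_nonneg h0).isSelfAdjoint.spectralRadius_eq_nnnorm, nnnorm_smul,
    NNReal.nnnorm_eq]
  exact_mod_cast mul_le_of_le_one_right' h1

end CStarAlgebra

/-- Wielandt–Friedland formula: for a positive map `φ` on a unital C*-algebra,
`r(φ) = inf { r(w⁻¹ φ(w)) : w strictly positive }`. -/
theorem stmt3 {A : Type*} [CStarAlgebra A] [PartialOrder A] [StarOrderedRing A]
    (φ : A →L[ℂ] A) (hφ : ∀ a : A, 0 ≤ a → 0 ≤ φ a) :
    spectralRadius ℂ φ =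
      ⨅ w : {w : Aˣ // 0 ≤ (w : A)},
        spectralRadius ℂ ((↑(w : Aˣ)⁻¹ : A) * φ ((w : Aˣ) : A)) := by
  refine le_antisymm (le_iInf fun w => φ.spectralRadius_le_spectralRadius_inv_mul_map hφ w.2) ?_
  refine le_of_forall_gt_imp_ge_of_dense fun s hs => ?_
  obtain ⟨t, hφt, hts⟩ := ENNReal.lt_iff_exists_nnreal_btwn.1 hs
  obtain ⟨w, hw1, hφw⟩ := φ.exists_one_le_map_eq_smul_sub_one hφ hφt
  lift w to Aˣ using CStarAlgebra.isUnit_of_le 1 hw1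
  calc _ ≤ spectralRadius ℂ ((↑w⁻¹ : A) * φ w) := iInf_le_of_le ⟨w, zero_le_one.trans hw1⟩ le_rfl
    _ ≤ t := spectralRadius_inv_mul_le_of_eq_smul_sub_one hw1 hφw
    _ ≤ s := hts.le
end

section
/- Let W₁, W₂ be two linearly independent positive semidefinite operators on a finite dimensional Hilbert space H. Then there exists a nonzero W₃ in the span of {W₁, W₂} which is positive semidefinite and singular (not injective). -/
/-!
If `W₁` is singular it is itself the required operator. Otherwise `W₁` is positive definite, so
the ratio `⟪W₂ x, x⟫ / ⟪W₁ x, x⟫` attains its maximum `c` on the compact unit sphere, at some `v`.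
Then `c • W₁ - W₂` is positive, and its quadratic form vanishes at `v`; for a positive operator
this forces `(c • W₁ - W₂) v = 0`. Linear independence makes `c • W₁ - W₂` nonzero.
-/

namespace ContinuousLinearMap

section

variable {H : Type*} [NormedAddCommGroup H] [InnerProductSpace ℂ H] [CompleteSpace H]

theorem IsPositive.apply_eq_zero_of_reApplyInnerSelf_eq_zero
    {T : H →L[ℂ] H} (hT : T.IsPositive) {v : H} (hv : T.reApplyInnerSelf v = 0) : T v = 0 := by
  have hT₀ : 0 ≤ T := (nonneg_iff_isPositive T).2 hT
  have hS : (CFC.sqrt T).IsPositive := (nonneg_iff_isPositive _).1 (CFC.sqrt_nonneg T)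
  -- `re ⟪T v, v⟫ = ‖√T v‖ ^ 2`
  have hSv : CFC.sqrt T v = 0 := by
    rw [← CFC.sqrt_mul_sqrt_self T hT₀, reApplyInnerSelf_apply, mul_apply_eq_comp,
      hS.inner_left_eq_inner_right, inner_self_eq_norm_sq] at hv
    simpa using hv
  rw [← CFC.sqrt_mul_sqrt_self T hT₀, mul_apply_eq_comp, hSv, map_zero]

theorem IsPositive.reApplyInnerSelf_pos_of_injective
    {T : H →L[ℂ] H} (hT : T.IsPositive) (hinj : Function.Injective T) {v : H} (hv : v ≠ 0) :
    0 < T.reApplyInnerSelf v :=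
  (hT.re_inner_nonneg_left v).lt_of_ne fun h =>
    hv (hinj (by rw [hT.apply_eq_zero_of_reApplyInnerSelf_eq_zero h.symm, map_zero]))

end

theorem exists_reApplyInnerSelf_le_mul_and_eq {𝕜 E : Type*} [RCLike 𝕜]
    [NormedAddCommGroup E] [InnerProductSpace 𝕜 E] [FiniteDimensional 𝕜 E] [Nontrivial E]
    {A : E →L[𝕜] E} (hA : ∀ v ≠ 0, 0 < A.reApplyInnerSelf v) (B : E →L[𝕜] E) :
    ∃ c : ℝ, ∃ v ≠ 0, (∀ x, B.reApplyInnerSelf x ≤ c * A.reApplyInnerSelf x) ∧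
      B.reApplyInnerSelf v = c * A.reApplyInnerSelf v := by
  have := FiniteDimensional.proper_rclike 𝕜 E
  let S := Metric.sphere (0 : E) 1
  have hS : ∀ v ∈ S, v ≠ 0 := fun v hv => ne_zero_of_mem_unit_sphere ⟨v, hv⟩
  let ratio x := B.reApplyInnerSelf x / A.reApplyInnerSelf x
  have hratio : ContinuousOn ratio S :=
    B.reApplyInnerSelf_continuous.continuousOn.div A.reApplyInnerSelf_continuous.continuousOn
      fun v hv => (hA v (hS v hv)).ne'
  obtain ⟨v, hvS, hmax⟩ := (isCompact_sphere (0 : E) 1).exists_isMaxOn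
    (Set.nonempty_coe_sort.1 (NormedSpace.sphere_nonempty_rclike 𝕜 zero_le_one)) hratio
  have hAv := hA v (hS v hvS)
  refine ⟨ratio v, v, hS v hvS, fun x => ?_, by simp only [ratio]; field_simp⟩
  rcases eq_or_ne x 0 with rfl | hx
  · simp [reApplyInnerSelf_apply]
  -- the ratio is invariant under scaling
  let k : 𝕜 := (‖x‖⁻¹ : ℝ)
  have hkx : k • x ∈ S := by simp [S, k, norm_smul, norm_ne_zero_iff.2 hx]
  have hk : 0 < ‖k‖ ^ 2 := pow_pos (norm_pos_iff.2 (by simp [k, hx])) 2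
  have hle := (div_le_iff₀ (hA _ (hS _ hkx))).1 (hmax hkx)
  rw [reApplyInnerSelf_smul, reApplyInnerSelf_smul, mul_left_comm] at hle
  exact le_of_mul_le_mul_left hle hk

theorem IsPositive.exists_isPositive_ofReal_smul_sub_not_injective
    {H : Type*} [NormedAddCommGroup H] [InnerProductSpace ℂ H] [FiniteDimensional ℂ H]
    [Nontrivial H] {W₁ W₂ : H →L[ℂ] H} (h1 : W₁.IsPositive) (hinj : Function.Injective W₁)
    (h2 : W₂.IsSymmetric) :
    ∃ c : ℝ, ((c : ℂ) • W₁ - W₂).IsPositive ∧ ¬Function.Injective ((c : ℂ) • W₁ - W₂) := by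
  obtain ⟨c, v, hv, hle, heq⟩ := exists_reApplyInnerSelf_le_mul_and_eq
    (fun _ => h1.reApplyInnerSelf_pos_of_injective hinj) W₂
  have hre : ∀ x, ((c : ℂ) • W₁ - W₂).reApplyInnerSelf x =
      c * W₁.reApplyInnerSelf x - W₂.reApplyInnerSelf x := fun x => by
    rw [reApplyInnerSelf_apply, sub_apply, smul_apply, inner_sub_left, inner_smul_left,
      Complex.conj_ofReal, map_sub, RCLike.re_to_complex, Complex.re_ofReal_mul]
    rfl
  have hpos : ((c : ℂ) • W₁ - W₂).IsPositive :=
    ⟨(h1.isSymmetric.smul (Complex.conj_ofReal c)).sub h2, fun x => by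
      rw [hre]; linarith [hle x]⟩
  refine ⟨c, hpos, fun hinj' => hv (hinj' ?_)⟩
  rw [hpos.apply_eq_zero_of_reApplyInnerSelf_eq_zero (by rw [hre, heq, sub_self]), map_zero]

end ContinuousLinearMap

/-- Given two linearly independent positive operators `W₁, W₂` on a finite dimensional Hilbert
space, some nonzero element of their span is positive and singular. -/
theorem stmt12 {H : Type*} [NormedAddCommGroup H] [InnerProductSpace ℂ H]
    [FiniteDimensional ℂ H] (W₁ W₂ : H →L[ℂ] H)
    (h1 : W₁.IsPositive) (h2 : W₂.IsPositive)
    (hli : LinearIndependent ℂ ![W₁, W₂]) :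
    ∃ W₃ : H →L[ℂ] H, W₃ ≠ 0 ∧ W₃ ∈ Submodule.span ℂ {W₁, W₂} ∧
      W₃.IsPositive ∧ ¬Function.Injective W₃ := by
  have hW₁ : W₁ ≠ 0 := by simpa using hli.ne_zero 0
  by_cases hinj : Function.Injective W₁
  swap
  · exact ⟨W₁, hW₁, Submodule.subset_span (by simp), h1, hinj⟩
  obtain ⟨x, hx⟩ := DFunLike.ne_iff.1 hW₁
  have : Nontrivial H := nontrivial_of_ne x 0 fun h => hx (by simp [h])
  obtain ⟨c, hpos, hsing⟩ := h1.exists_isPositive_ofReal_smul_sub_not_injective hinj h2.isSymmetric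
  refine ⟨_, fun h => ?_, ?_, hpos, hsing⟩
  · have := (LinearIndependent.pair_iff.1 hli (c : ℂ) (-1) (by rw [← h]; module)).2
    norm_num at this
  · exact Submodule.sub_mem _ (Submodule.smul_mem _ _ (Submodule.subset_span (by simp)))
      (Submodule.subset_span (by simp))
end

section
/- Define the CP map τ on M₂(ℂ) by τ([[a,b],[c,d]]) = [[a+d, 0],[0,0]]. Then r(τ) = 1 and ‖τⁿ‖ = 2 for all n ≥ 1, yet there exists no strictly positive (positive definite) V ∈ M₂(ℂ) with τ(V) ≤ V. -/
open scoped ComplexOrder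

/-! τ is `X ↦ tr(X) • E₁₁`. Since `tr E₁₁ = 1`, τ is an idempotent, so its spectrum is `{0, 1}`
and `τⁿ(I) = τ(I) = 2 E₁₁`, whose operator norm is `2 ‖E₁₁‖ = 2` as `E₁₁` is a nonzero
orthogonal projection. On the other hand τ is trace preserving, so `V - τ V ≥ 0` has trace zero
and hence vanishes; but then `V = tr(V) E₁₁` is singular. -/

theorem IsIdempotentElem.one_mem_spectrum {𝕜 A : Type*} [Field 𝕜] [Ring A] [Algebra 𝕜 A]
    {p : A} (hp : IsIdempotentElem p) (h0 : p ≠ 0) : (1 : 𝕜) ∈ spectrum 𝕜 p := by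
  rw [spectrum.mem_iff, map_one]
  rintro ⟨u, hu⟩
  have : p * u = 0 := by rw [hu, mul_sub, mul_one, hp.eq, sub_self]
  exact h0 ((Units.mul_left_eq_zero u).mp this)

theorem IsIdempotentElem.one_le_norm {R : Type*} [NonUnitalNormedRing R] {e : R}
    (he : IsIdempotentElem e) (h0 : e ≠ 0) : 1 ≤ ‖e‖ := by
  have hpos : 0 < ‖e‖ := norm_pos_iff.mpr h0
  have : ‖e‖ * 1 ≤ ‖e‖ * ‖e‖ := by simpa [he.eq] using norm_mul_le e e
  exact le_of_mul_le_mul_left this hpos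

theorem IsStarProjection.norm_eq_one {R : Type*} [NonUnitalNormedRing R] [StarRing R]
    [CStarRing R] {e : R} (he : IsStarProjection e) (h0 : e ≠ 0) : ‖e‖ = 1 :=
  le_antisymm (he.norm_le e) (he.isIdempotentElem.one_le_norm h0)

theorem Matrix.isStarProjection_single_one {n R : Type*} [DecidableEq n] [Fintype n]
    [CommSemiring R] [StarRing R] (i : n) : IsStarProjection (Matrix.single i i (1 : R)) :=
  ⟨by simp [IsIdempotentElem, Matrix.single_mul_single_same],
    by simp [IsSelfAdjoint, Matrix.star_eq_conjTranspose, Matrix.conjTranspose_single]⟩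

theorem Matrix.norm_toEuclideanCLM_single_one {𝕜 n : Type*} [RCLike 𝕜] [DecidableEq n]
    [Fintype n] (i : n) : ‖Matrix.toEuclideanCLM (𝕜 := 𝕜) (Matrix.single i i 1)‖ = 1 :=
  ((Matrix.isStarProjection_single_one i).map _).norm_eq_one <|
    (map_ne_zero_iff _ (Matrix.toEuclideanCLM (𝕜 := 𝕜)).injective).mpr
      fun h ↦ by simpa using congrFun (congrFun h i) i

section TraceSMul

variable {𝕜 n : Type*} [Field 𝕜] [Fintype n] {τ : Module.End 𝕜 (Matrix n n 𝕜)}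
  {P : Matrix n n 𝕜}

theorem trace_apply_of_eq_trace_smul (hτ : ∀ X, τ X = X.trace • P) (hP : P.trace = 1)
    (X : Matrix n n 𝕜) : (τ X).trace = X.trace := by
  rw [hτ, Matrix.trace_smul, hP, smul_eq_mul, mul_one]

theorem isIdempotentElem_of_eq_trace_smul (hτ : ∀ X, τ X = X.trace • P) (hP : P.trace = 1) :
    IsIdempotentElem τ :=
  LinearMap.ext fun X ↦ by
    rw [Module.End.mul_apply, hτ (τ X), trace_apply_of_eq_trace_smul hτ hP, hτ]

theorem ne_zero_of_eq_trace_smul (hτ : ∀ X, τ X = X.trace • P) (hP : P.trace = 1) : τ ≠ 0 := by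
  intro h
  have : τ P = 0 := by rw [h, LinearMap.zero_apply]
  rw [hτ, hP, one_smul] at this
  simp [this] at hP

end TraceSMul

theorem eq_of_posSemidef_sub_of_trace_apply {𝕜 n : Type*} [RCLike 𝕜] [Fintype n]
    {τ : Module.End 𝕜 (Matrix n n 𝕜)} (hτ : ∀ X, (τ X).trace = X.trace) {V : Matrix n n 𝕜}
    (hV : (V - τ V).PosSemidef) : V = τ V :=
  sub_eq_zero.mp <| hV.trace_eq_zero_iff.mp <| by rw [Matrix.trace_sub, hτ, sub_self]

/-- For the CP map `τ([[a,b],[c,d]]) = [[a+d,0],[0,0]]` on `M₂(ℂ)`: `r(τ) = 1`,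
`‖τⁿ‖ = ‖τⁿ(I)‖ = 2` for all `n ≥ 1`, yet there is no positive definite `V` with `τ(V) ≤ V`. -/
theorem stmt13 (τ : Module.End ℂ (Matrix (Fin 2) (Fin 2) ℂ))
    (hτ : ∀ X : Matrix (Fin 2) (Fin 2) ℂ,
      τ X = (X 0 0 + X 1 1) • Matrix.single 0 0 (1 : ℂ)) :
    ((1 : ℂ) ∈ spectrum ℂ τ ∧ ∀ z ∈ spectrum ℂ τ, ‖z‖ ≤ 1) ∧
    (∀ n : ℕ, 1 ≤ n → ‖Matrix.toEuclideanCLM (𝕜 := ℂ) ((τ ^ n) 1)‖ = 2) ∧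
    ¬∃ V : Matrix (Fin 2) (Fin 2) ℂ, V.PosDef ∧ (V - τ V).PosSemidef := by
  have hτ' : ∀ X, τ X = X.trace • Matrix.single 0 0 (1 : ℂ) := by
    simpa only [Matrix.trace_fin_two] using hτ
  have hP : (Matrix.single 0 0 (1 : ℂ) : Matrix (Fin 2) (Fin 2) ℂ).trace = 1 := by simp
  have hidem := isIdempotentElem_of_eq_trace_smul hτ' hP
  refine ⟨⟨hidem.one_mem_spectrum (ne_zero_of_eq_trace_smul hτ' hP), fun z hz ↦ ?_⟩,
    fun n hn ↦ ?_, ?_⟩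
  · rcases hidem.spectrum_subset ℂ hz with rfl | rfl <;> simp
  · obtain ⟨m, rfl⟩ := Nat.exists_eq_add_of_le' hn
    rw [hidem.pow_succ_eq, hτ', map_smul, norm_smul, Matrix.norm_toEuclideanCLM_single_one]
    norm_num
  · rintro ⟨V, hV, hsub⟩
    have h11 := hV.diag_pos (i := 1)
    rw [eq_of_posSemidef_sub_of_trace_apply (trace_apply_of_eq_trace_smul hτ' hP) hsub,
      hτ'] at h11
    simp at h11
end

section
/- Let ψ_{ij} : M_{n_j}(ℂ) → M_{n_i}(ℂ), 1 ≤ i,j ≤ d, be positive maps such that id + ψ_{ii} is strictly positive for each i and ψ_{ij} is strictly positive for all i ≠ j. Let X = (X_{ij}) ∈ M_m(ℂ), m = n₁+⋯+n_d, be a nonzero positive semidefinite block matrix. Define Y by Y_{ii} = X_{ii} + Σ_k ψ_{ik}(X_{kk}) and Y_{ij} = X_{ij} for i ≠ j. Then Y is positive definite. -/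
/-!
Write the perturbed matrix as `X + blockDiagonal' D` with `D i = ∑ k, ψ i k X_kk`, and fix a
block `k` with `X_kk ≠ 0`; it exists since a nonzero positive semidefinite matrix has nonzero
trace. Then `D j` is positive definite for `j ≠ k`, since it contains the term `ψ j k X_kk`, and so
is `X_kk + D k`, since it contains `X_kk + ψ k k X_kk`. For `x ≠ 0`, either some block `x_j` with
`j ≠ k` is nonzero, and already `x_j* D j x_j > 0`, or `x` is supported in block `k`, where the
quadratic form of `X + blockDiagonal' D` is that of `X_kk + D k`.
-/

open scoped ComplexOrder
open Matrix

namespace Matrix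

section Sigma

variable {ι : Type*} [Fintype ι] {m : ι → Type*} [∀ i, Fintype (m i)] {R : Type*}

theorem dotProduct_mulVec_sigma [NonUnitalNonAssocSemiring R]
    (x y : (Σ i, m i) → R) (M : Matrix (Σ i, m i) (Σ i, m i) R) :
    x ⬝ᵥ M *ᵥ y = ∑ i, ∑ j,
      (x ∘ Sigma.mk i) ⬝ᵥ M.submatrix (Sigma.mk i) (Sigma.mk j) *ᵥ (y ∘ Sigma.mk j) := by
  simp only [dotProduct, mulVec, Fintype.sum_sigma, Finset.mul_sum, Function.comp_apply,
    submatrix_apply]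
  exact Finset.sum_congr rfl fun i _ => Finset.sum_comm

theorem dotProduct_mulVec_eq_submatrix_of_forall_ne_eq_zero [NonUnitalNonAssocSemiring R]
    {x y : (Σ i, m i) → R} {k : ι} (hx : ∀ j ≠ k, x ∘ Sigma.mk j = 0)
    (hy : ∀ j ≠ k, y ∘ Sigma.mk j = 0) (M : Matrix (Σ i, m i) (Σ i, m i) R) :
    x ⬝ᵥ M *ᵥ y =
      (x ∘ Sigma.mk k) ⬝ᵥ M.submatrix (Sigma.mk k) (Sigma.mk k) *ᵥ (y ∘ Sigma.mk k) := by
  rw [dotProduct_mulVec_sigma, Finset.sum_eq_single k (fun i _ hi => by simp [hx i hi]) (by simp),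
    Finset.sum_eq_single k (fun j _ hj => by simp [hy j hj]) (by simp)]

variable [DecidableEq ι]

theorem dotProduct_blockDiagonal'_mulVec [NonUnitalNonAssocSemiring R]
    (x y : (Σ i, m i) → R) (D : ∀ i, Matrix (m i) (m i) R) :
    x ⬝ᵥ blockDiagonal' D *ᵥ y = ∑ i, (x ∘ Sigma.mk i) ⬝ᵥ D i *ᵥ (y ∘ Sigma.mk i) := by
  rw [dotProduct_mulVec_sigma]
  refine Finset.sum_congr rfl fun i _ =>
    (Finset.sum_eq_single i (fun j _ hj => ?_) (by simp)).trans ?_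
  · have : (blockDiagonal' D).submatrix (Sigma.mk i) (Sigma.mk j) = 0 := by
      ext a b; exact blockDiagonal'_apply_ne D a b hj.symm
    simp [this]
  · congr 2
    ext a b
    exact blockDiagonal'_apply_eq D i a b

variable [Ring R] [PartialOrder R] [StarRing R] [StarOrderedRing R]

theorem PosSemidef.posDef_add_blockDiagonal' {X : Matrix (Σ i, m i) (Σ i, m i) R}
    {D : ∀ i, Matrix (m i) (m i) R} (hX : X.PosSemidef) (hD : ∀ i, (D i).PosSemidef) (k : ι)
    (hk : (X.submatrix (Sigma.mk k) (Sigma.mk k) + D k).PosDef)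
    (hne : ∀ j ≠ k, (D j).PosDef) :
    (X + blockDiagonal' D).PosDef := by
  refine PosDef.of_dotProduct_mulVec_pos
    (hX.1.add (isHermitian_blockDiagonal'_iff.2 fun i => (hD i).1)) fun x hx => ?_
  rw [add_mulVec, dotProduct_add, dotProduct_blockDiagonal'_mulVec]
  by_cases hout : ∃ j ≠ k, x ∘ Sigma.mk j ≠ 0
  · obtain ⟨j, hjk, hxj⟩ := hout
    exact add_pos_of_nonneg_of_pos (hX.dotProduct_mulVec_nonneg x) <|
      Finset.sum_pos' (fun i _ => (hD i).dotProduct_mulVec_nonneg _)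
        ⟨j, Finset.mem_univ j, (hne j hjk).dotProduct_mulVec_pos hxj⟩
  · push Not at hout
    have hxk : x ∘ Sigma.mk k ≠ 0 := fun h0 => hx <| funext fun ⟨j, a⟩ => by
      obtain rfl | hj := eq_or_ne j k
      · exact congrFun h0 a
      · exact congrFun (hout j hj) a
    have hstar : ∀ j ≠ k, star x ∘ Sigma.mk j = 0 := fun j hj =>
      (congrArg star (hout j hj)).trans (star_zero _)
    rw [dotProduct_mulVec_eq_submatrix_of_forall_ne_eq_zero hstar hout,
      Finset.sum_eq_single k (fun j _ hj => by simp [hout j hj]) (by simp),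
      ← dotProduct_add, ← add_mulVec]
    exact hk.dotProduct_mulVec_pos hxk

end Sigma

theorem blockDiagonal'_apply_fin {ι α : Type*} [DecidableEq ι] [Zero α] {n : ι → ℕ}
    (D : ∀ i, Matrix (Fin (n i)) (Fin (n i)) α) (p q : Σ i, Fin (n i)) :
    blockDiagonal' D p q =
      if h : p.1 = q.1 then D p.1 p.2 (Fin.cast (congrArg n h.symm) q.2) else 0 := by
  obtain ⟨i, a⟩ := p
  obtain ⟨j, b⟩ := q
  obtain rfl | hij := eq_or_ne i j
  · simp
  · simp [blockDiagonal'_apply_ne D a b hij, hij]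

theorem PosSemidef.exists_diag_ne_zero {n 𝕜 : Type*} [Fintype n] [RCLike 𝕜] {A : Matrix n n 𝕜}
    (hA : A.PosSemidef) (hA0 : A ≠ 0) : ∃ i, A i i ≠ 0 := by
  by_contra! h
  exact hA0 (hA.trace_eq_zero_iff.1 (Finset.sum_eq_zero fun i _ => h i))

end Matrix

/-- Perturbing the diagonal blocks of a nonzero positive semidefinite block matrix `X` by
strictly positive maps of its diagonal blocks yields a positive definite matrix. -/
theorem stmt17 {d : ℕ} (n : Fin d → ℕ)
    (ψ : ∀ i j : Fin d,
      Matrix (Fin (n j)) (Fin (n j)) ℂ →ₗ[ℂ] Matrix (Fin (n i)) (Fin (n i)) ℂ)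
    (hpos : ∀ i j, ∀ B : Matrix (Fin (n j)) (Fin (n j)) ℂ,
      B.PosSemidef → (ψ i j B).PosSemidef)
    (hdiag : ∀ i, ∀ B : Matrix (Fin (n i)) (Fin (n i)) ℂ,
      B.PosSemidef → B ≠ 0 → (B + ψ i i B).PosDef)
    (hoff : ∀ i j, i ≠ j → ∀ B : Matrix (Fin (n j)) (Fin (n j)) ℂ,
      B.PosSemidef → B ≠ 0 → (ψ i j B).PosDef)
    (X : Matrix (Σ i, Fin (n i)) (Σ i, Fin (n i)) ℂ)
    (hX : X.PosSemidef) (hX0 : X ≠ 0) :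
    (Matrix.of (fun p q : Σ i, Fin (n i) =>
      X p q + if h : p.1 = q.1 then
        (∑ k, ψ p.1 k (Matrix.of fun a b => X ⟨k, a⟩ ⟨k, b⟩)) p.2
          (Fin.cast (congrArg n h.symm) q.2)
      else 0)).PosDef := by
  obtain ⟨⟨k, a⟩, hka⟩ := hX.exists_diag_ne_zero hX0
  set B : ∀ j, Matrix (Fin (n j)) (Fin (n j)) ℂ := fun j => Matrix.of fun a b => X ⟨j, a⟩ ⟨j, b⟩
  have hB : ∀ j, (B j).PosSemidef := fun j => hX.submatrix _
  have hBk : B k ≠ 0 := fun h => hka (congrFun (congrFun h a) a)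
  have hψ : ∀ i, (∑ j ∈ Finset.univ.erase k, ψ i j (B j)).PosSemidef :=
    fun i => posSemidef_sum _ fun j _ => hpos i j _ (hB j)
  suffices hY : (X + blockDiagonal' fun i => ∑ j, ψ i j (B j)).PosDef by
    convert hY using 1
    ext p q
    rw [Matrix.add_apply, blockDiagonal'_apply_fin]
    rfl
  refine hX.posDef_add_blockDiagonal' (fun i => posSemidef_sum _ fun j _ => hpos i j _ (hB j)) k
    ?_ fun j hjk => ?_
  · rw [← Finset.add_sum_erase _ _ (Finset.mem_univ k), ← add_assoc]
    exact (hdiag k _ (hB k) hBk).add_posSemidef (hψ k)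
  · rw [← Finset.add_sum_erase _ _ (Finset.mem_univ k)]
    exact (hoff j k hjk _ (hB k) hBk).add_posSemidef (hψ j)
end

section
/- Let τ be a completely positive map on the finite dimensional C*-algebra A = M_{n₁}(ℂ) ⊕ ⋯ ⊕ M_{n_d}(ℂ) ⊂ M_m(ℂ), m = n₁+⋯+n_d, and suppose τ(X) = Σ_{i=1}^p A_i* X A_i for all X ∈ A, where A₁,...,A_p ∈ M_m(ℂ) generate M_m(ℂ) as an algebra. Then τ is irreducible: there is no nontrivial projection P ∈ A with τ(pAp) ⊆ pAp (equivalently τ(P) ≤ λP for some λ > 0). -/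
open scoped ComplexOrder
open Matrix

/-!
Let `Q = 1 - P`. Compressing `λ P - τ(P) ≥ 0` by `Q` kills `λ P` (as `Q P = 0`) and leaves
`-∑ (P Aᵢ Q)ᴴ (P Aᵢ Q) ≥ 0`, so `P Aᵢ Q = 0` for every `i`. The matrices `X` with `P X Q = 0` form
a subalgebra, hence contain the algebra generated by the `Aᵢ`, which is everything; but a matrix
unit `X` has `P X Q ≠ 0` as soon as `P ≠ 0` and `Q ≠ 0`.
-/

section StarOrderedRing

variable {R : Type*} [Ring R] [PartialOrder R] [StarRing R] [StarOrderedRing R]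

theorem star_mul_self_eq_zero_of_sum_nonpos {ι : Type*} {s : Finset ι} {b : ι → R}
    (h : ∑ i ∈ s, star (b i) * b i ≤ 0) : ∀ i ∈ s, star (b i) * b i = 0 :=
  (Finset.sum_eq_zero_iff_of_nonneg fun i _ => star_mul_self_nonneg (b i)).mp
    (le_antisymm h (Finset.sum_nonneg fun i _ => star_mul_self_nonneg (b i)))

theorem IsStarProjection.star_mul_self_eq_zero_of_sum_le {K ι : Type*} [Fintype ι]
    [CommSemiring K] [Module K R] [IsScalarTower K R R] [SMulCommClass K R R]
    {p : R} (hp : IsStarProjection p) (a : ι → R) (c : K)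
    (h : ∑ i, star (a i) * p * a i ≤ c • p) (i : ι) :
    star (p * a i * (1 - p)) * (p * a i * (1 - p)) = 0 := by
  have hq := hp.one_sub
  have hqp : (1 - p) * p = 0 := by rw [sub_mul, one_mul, hp.isIdempotentElem.eq, sub_self]
  have hconj := star_left_conjugate_le_conjugate h (1 - p)
  have hrhs : star (1 - p) * (c • p) * (1 - p) = 0 := by
    rw [hq.isSelfAdjoint.star_eq, mul_smul_comm, hqp, smul_zero, zero_mul]
  have hlhs : star (1 - p) * (∑ i, star (a i) * p * a i) * (1 - p)
      = ∑ i, star (p * a i * (1 - p)) * (p * a i * (1 - p)) := by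
    simp only [Finset.mul_sum, Finset.sum_mul, star_mul, hp.isSelfAdjoint.star_eq,
      hq.isSelfAdjoint.star_eq]
    refine Finset.sum_congr rfl fun j _ => ?_
    calc (1 - p) * (star (a j) * p * a j) * (1 - p)
        = (1 - p) * star (a j) * (p * p) * a j * (1 - p) := by
          rw [hp.isIdempotentElem.eq]; noncomm_ring
      _ = _ := by noncomm_ring
  rw [hrhs, hlhs] at hconj
  exact star_mul_self_eq_zero_of_sum_nonpos hconj i (Finset.mem_univ i)

end StarOrderedRing

section MatrixOrder

open scoped MatrixOrder

theorem IsStarProjection.mul_mul_one_sub_eq_zero_of_posSemidef {𝕜 m ι : Type*} [RCLike 𝕜]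
    [Fintype m] [DecidableEq m] [Fintype ι] {P : Matrix m m 𝕜} (hP : IsStarProjection P)
    (A : ι → Matrix m m 𝕜) (c : 𝕜) (h : (c • P - ∑ i, (A i)ᴴ * P * A i).PosSemidef) (i : ι) :
    P * A i * (1 - P) = 0 :=
  conjTranspose_mul_self_eq_zero.mp (hP.star_mul_self_eq_zero_of_sum_le A c (le_iff.mpr h) i)

end MatrixOrder

namespace IsIdempotentElem

variable {R : Type*} [Ring R] {e : R}

/-- The elements leaving the right ideal `(1 - e) R` invariant. -/
def invariantSubalgebra (K : Type*) [CommSemiring K] [Algebra K R] (he : IsIdempotentElem e) :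
    Subalgebra K R where
  carrier := {x | e * x * (1 - e) = 0}
  mul_mem' {x y} (hx : e * x * (1 - e) = 0) (hy : e * y * (1 - e) = 0) := by
    show e * (x * y) * (1 - e) = 0
    calc e * (x * y) * (1 - e) = e * x * (1 - e) * y * (1 - e) + e * x * (e * y * (1 - e)) := by
          noncomm_ring
      _ = 0 := by rw [hx, hy]; simp
  add_mem' {x y} (hx : e * x * (1 - e) = 0) (hy : e * y * (1 - e) = 0) := by
    show e * (x + y) * (1 - e) = 0
    rw [mul_add, add_mul, hx, hy, add_zero]
  algebraMap_mem' c := by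
    show e * algebraMap K R c * (1 - e) = 0
    rw [← Algebra.commutes, mul_assoc, mul_sub, mul_one, he.eq, sub_self, mul_zero]

theorem mul_mul_one_sub_eq_zero_of_mem_adjoin {K : Type*} [CommSemiring K] [Algebra K R]
    (he : IsIdempotentElem e) {s : Set R} (hs : ∀ a ∈ s, e * a * (1 - e) = 0) {x : R}
    (hx : x ∈ Algebra.adjoin K s) : e * x * (1 - e) = 0 :=
  Algebra.adjoin_le (S := he.invariantSubalgebra K) hs hx

end IsIdempotentElem

theorem Matrix.exists_mul_mul_ne_zero {l m n o α : Type*} [Fintype m] [Fintype n]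
    [DecidableEq m] [DecidableEq n] [Semiring α] [NoZeroDivisors α]
    {P : Matrix l m α} {Q : Matrix n o α} (hP : P ≠ 0) (hQ : Q ≠ 0) :
    ∃ X : Matrix m n α, P * X * Q ≠ 0 := by
  obtain ⟨a, c, hac⟩ : ∃ a c, P a c ≠ 0 := by
    by_contra! h
    exact hP (Matrix.ext h)
  obtain ⟨c', b, hcb⟩ : ∃ c' b, Q c' b ≠ 0 := by
    by_contra! h
    exact hQ (Matrix.ext h)
  refine ⟨single c c' 1, fun h => mul_ne_zero hac hcb ?_⟩
  simpa [mul_apply, single_apply, ite_and] using congr_fun (congr_fun h a) b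

theorem stmt18_general {d p : ℕ} (n : Fin d → ℕ)
    (A : Fin p → Matrix (Σ i, Fin (n i)) (Σ i, Fin (n i)) ℂ)
    (hgen : Algebra.adjoin ℂ (Set.range A) = ⊤) :
    ¬∃ P : Matrix (Σ i, Fin (n i)) (Σ i, Fin (n i)) ℂ,
      (∀ a b, a.1 ≠ b.1 → P a b = 0) ∧ P.IsHermitian ∧ P * P = P ∧
      P ≠ 0 ∧ P ≠ 1 ∧
      ∃ lam : ℝ, 0 < lam ∧ ((lam : ℂ) • P - ∑ i, (A i)ᴴ * P * A i).PosSemidef := by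
  rintro ⟨P, -, hP, hP2, hP0, hP1, lam, -, hle⟩
  have hPproj : IsStarProjection P := ⟨hP2, hP.isSelfAdjoint⟩
  have hall (X : Matrix (Σ i, Fin (n i)) (Σ i, Fin (n i)) ℂ) : P * X * (1 - P) = 0 :=
    hPproj.isIdempotentElem.mul_mul_one_sub_eq_zero_of_mem_adjoin
      (by rintro _ ⟨i, rfl⟩; exact hPproj.mul_mul_one_sub_eq_zero_of_posSemidef A _ hle i)
      (hgen ▸ Algebra.mem_top)
  obtain ⟨X, hX⟩ := exists_mul_mul_ne_zero hP0 (sub_ne_zero.mpr (Ne.symm hP1))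
  exact hX (hall X)

/-- If a CP map `τ(X) = Σ Aᵢ* X Aᵢ` on the block-diagonal C*-algebra
`A = M_{n₁} ⊕ ⋯ ⊕ M_{n_d} ⊆ M_m(ℂ)` has Kraus coefficients `Aᵢ ∈ M_m(ℂ)` generating
`M_m(ℂ)` as an algebra, then `τ` is irreducible: there is no nontrivial projection `P ∈ A`
with `τ(P) ≤ λ P` for some `λ > 0`. -/
theorem stmt18 {d p : ℕ} (n : Fin d → ℕ)
    (A : Fin p → Matrix (Σ i, Fin (n i)) (Σ i, Fin (n i)) ℂ)
    (hgen : Algebra.adjoin ℂ (Set.range A) = ⊤)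
    (hτA : ∀ X : Matrix (Σ i, Fin (n i)) (Σ i, Fin (n i)) ℂ,
      (∀ a b, a.1 ≠ b.1 → X a b = 0) →
        ∀ a b, a.1 ≠ b.1 → (∑ i, (A i)ᴴ * X * A i) a b = 0) :
    ¬∃ P : Matrix (Σ i, Fin (n i)) (Σ i, Fin (n i)) ℂ,
      (∀ a b, a.1 ≠ b.1 → P a b = 0) ∧ P.IsHermitian ∧ P * P = P ∧
      P ≠ 0 ∧ P ≠ 1 ∧
      ∃ lam : ℝ, 0 < lam ∧ ((lam : ℂ) • P - ∑ i, (A i)ᴴ * P * A i).PosSemidef :=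
  stmt18_general n A hgen
end
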